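/- Let f : ℝ^d → ℝ be μ-strongly convex (μ > 0), closed, and proper, and let α > 0. Then the map -(2·Prox_{αf} - I) is 1/(1+αμ)-averaged. -/

import Mathlib

def Nonexpansive {d : ℕ} (T : EuclideanSpace ℝ (Fin d) → EuclideanSpace ℝ (Fin d)) : Prop :=
  ∀ x y, ‖T x - T y‖ ≤ ‖x - y‖

def Averaged {d : ℕ} (θ : ℝ) (T : EuclideanSpace ℝ (Fin d) → EuclideanSpace ℝ (Fin d)) : Prop :=
  ∃ R : EuclideanSpace ℝ (Fin d) → EuclideanSpace ℝ (Fin d),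
    Nonexpansive R ∧ ∀ x, T x = θ • R x + (1 - θ) • x

local notation "⟪" x ", " y "⟫" => @inner ℝ _ _ x y

lemma comb_sq {d : ℕ} (a b : ℝ) (hab : a + b = 1) (u w : EuclideanSpace ℝ (Fin d)) :
    ‖a • u + b • w‖ ^ 2 = a * ‖u‖ ^ 2 + b * ‖w‖ ^ 2 - a * b * ‖u - w‖ ^ 2 := by
  have h1 : ‖a • u + b • w‖ ^ 2 = a^2*‖u‖^2 + 2*(a*b)*⟪u,w⟫ + b^2*‖w‖^2 := by
    rw [norm_add_sq_real, norm_smul, norm_smul, real_inner_smul_left, real_inner_smul_right]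
    simp [mul_pow, sq_abs]; ring
  have h2 : ‖u - w‖ ^ 2 = ‖u‖^2 - 2*⟪u,w⟫ + ‖w‖^2 := norm_sub_sq_real u w
  have hb : b = 1 - a := by linarith
  subst hb
  rw [h1, h2]; ring

set_option maxHeartbeats 1600000 in
theorem neg_reflected_prox_averaged {d : ℕ}
    (f : EuclideanSpace ℝ (Fin d) → ℝ) (μ α : ℝ) (hμ : 0 < μ) (hα : 0 < α)
    (hsc : ConvexOn ℝ Set.univ (fun x => f x - μ / 2 * ‖x‖ ^ 2))
    (hcl : LowerSemicontinuous f)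
    (prox : EuclideanSpace ℝ (Fin d) → EuclideanSpace ℝ (Fin d))
    (hprox : ∀ z x, α * f (prox z) + (1 / 2) * ‖prox z - z‖ ^ 2 ≤
      α * f x + (1 / 2) * ‖x - z‖ ^ 2) :
    Averaged (1 / (1 + α * μ)) (fun z => -(2 • prox z - z)) := by
  set m : ℝ := 1 + α * μ with hm_def
  have hm : (0:ℝ) < m := by positivity
  -- strong-convexity growth at the prox point
  have growth : ∀ z w, α * f (prox z) + (1/2) * ‖prox z - z‖^2 + m/2 * ‖w - prox z‖^2 ≤
      α * f w + (1/2) * ‖w - z‖^2 := by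
    intro z w
    set u := prox z with hu
    set q : ℝ := ‖w - u‖^2 with hq_def
    have hq0 : 0 ≤ q := by positivity
    set D : ℝ := (α * f w + (1/2) * ‖w - z‖^2) - (α * f u + (1/2) * ‖u - z‖^2) with hD_def
    have hD0 : 0 ≤ D := by have := hprox z w; simp only [hD_def]; linarith
    have step : ∀ t : ℝ, t ∈ Set.Ioo (0:ℝ) 1 → m/2 * (1-t) * q ≤ D := by
      intro t ht
      obtain ⟨ht0, ht1⟩ := ht
      have hconv := hsc.2 (Set.mem_univ u) (Set.mem_univ w)
        (by linarith : (0:ℝ) ≤ 1 - t) ht0.le (by ring)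
      simp only [smul_eq_mul] at hconv
      have hn1 := comb_sq (1-t) t (by ring) u w
      have hn2 := comb_sq (1-t) t (by ring) (u-z) (w-z)
      have hpt : ((1-t)•u + t•w) - z = (1-t)•(u-z) + t•(w-z) := by
        module
      have hdz : (u-z) - (w-z) = u - w := by abel
      rw [hdz] at hn2
      have hmin := hprox z ((1-t)•u + t•w)
      rw [hpt, hn2] at hmin
      have hconv' := mul_le_mul_of_nonneg_left hconv hα.le
      rw [hn1] at hconv'
      have hwu : ‖w - u‖ = ‖u - w‖ := norm_sub_rev _ _
      have hq' : q = ‖u - w‖^2 := by rw [hq_def, hwu]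
      -- derive t * (stuff) inequality then cancel t
      have key : t * (m/2 * (1-t) * q) ≤ t * D := by
        simp only [hq', hD_def, hm_def, ← hu]
        nlinarith [hmin, hconv']
      exact le_of_mul_le_mul_left key ht0
    by_contra hcon
    push_neg at hcon
    clear_value q D
    have hDq : D < m/2 * q := by simp only [hD_def] at hcon ⊢; linarith
    have hq_pos : 0 < q := by
      rcases lt_or_ge 0 q with h|h
      · exact h
      · exfalso
        have : m/2*q ≤ 0 := mul_nonpos_of_nonneg_of_nonpos (by positivity) h
        linarith
    set t : ℝ := (m/2*q - D)/(m*q) with ht_def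
    have hmq : 0 < m * q := by positivity
    have ht0 : 0 < t := by apply div_pos; linarith; exact hmq
    have ht1 : t < 1 := by
      rw [div_lt_one hmq]; nlinarith
    have := step t ⟨ht0, ht1⟩
    have htval : t * (m*q) = m/2*q - D := by
      rw [ht_def]; field_simp
    clear_value t
    linarith [this, htval, hDq, hq_pos]
  -- strong monotonicity of prox
  have mono : ∀ x y, m * ‖prox x - prox y‖^2 ≤ ⟪prox x - prox y, x - y⟫ := by
    intro x y
    set u := prox x
    set v := prox y
    have g1 := growth x v
    have g2 := growth y u
    have hvu : ‖v - u‖ = ‖u - v‖ := norm_sub_rev _ _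
    have e1 : ‖v - x‖^2 = ‖v‖^2 - 2*⟪v,x⟫ + ‖x‖^2 := norm_sub_sq_real v x
    have e2 : ‖u - x‖^2 = ‖u‖^2 - 2*⟪u,x⟫ + ‖x‖^2 := norm_sub_sq_real u x
    have e3 : ‖u - y‖^2 = ‖u‖^2 - 2*⟪u,y⟫ + ‖y‖^2 := norm_sub_sq_real u y
    have e4 : ‖v - y‖^2 = ‖v‖^2 - 2*⟪v,y⟫ + ‖y‖^2 := norm_sub_sq_real v y
    have e5 : ⟪u - v, x - y⟫ = ⟪u,x⟫ - ⟪u,y⟫ - ⟪v,x⟫ + ⟪v,y⟫ := by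
      rw [inner_sub_left, inner_sub_right, inner_sub_right]; ring
    rw [hvu] at g1
    rw [e5]
    nlinarith [g1, g2]
  refine ⟨fun z => z - (2*m) • prox z, ?_, ?_⟩
  · intro x y
    have h2 : ‖(x - (2*m) • prox x) - (y - (2*m) • prox y)‖^2 ≤ ‖x - y‖^2 := by
      have hrw : (x - (2*m) • prox x) - (y - (2*m) • prox y)
          = (x - y) - (2*m) • (prox x - prox y) := by
        simp [smul_sub]; abel
      rw [hrw, norm_sub_sq_real, real_inner_smul_right, norm_smul, Real.norm_eq_abs,
        abs_of_pos (show (0:ℝ) < 2*m by positivity),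
        real_inner_comm (prox x - prox y) (x - y)]
      have h4 := mul_le_mul_of_nonneg_left (mono x y) (show (0:ℝ) ≤ 4*m by positivity)
      nlinarith [h4]
    have := Real.sqrt_le_sqrt h2
    rwa [Real.sqrt_sq (norm_nonneg _), Real.sqrt_sq (norm_nonneg _)] at this
  · intro x
    have hm' : m ≠ 0 := ne_of_gt hm
    show -(2 • prox x - x) = (1/m) • (x - (2*m) • prox x) + (1 - 1/m) • x
    have h2 : (2:ℕ) • prox x = (2:ℝ) • prox x := by
      simp [two_smul]
    rw [h2, smul_sub, smul_smul, sub_smul, one_smul]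
    have : (1/m) * (2*m) = 2 := by field_simp
    rw [this]
    module
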